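/- arXiv:2501.08330 — 9 statements merged into one kernel-verified Lean document; each statement's English description precedes it below -/
import Mathlib

section
/- Let d = 1 and suppose each loss ℓ_t is L-Lipschitz (so |g_t(θ)| ≤ L for all subgradients) and (h_t, 0)-restorative: sign(g_t(θ)) = sign(θ) for all |θ| > h_t. If the horizons h_t are nondecreasing, then gradient descent with constant step size η > 0 satisfies |θ_{T+1}| ≤ max{|θ_1|, h_T} + ηL for all T. -/
open Finset

/-- Univariate gradient descent with constant step size, `L`-Lipschitz losses, and
`(h_t, 0)`-restorative gradient fields with nondecreasing horizons: the iterates satisfy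
`|θ_{T+1}| ≤ max {|θ₁|, h_T} + ηL`. -/
theorem gd_iterate_bound_zero_curv_1d (η L : ℝ) (hη : 0 < η)
    (θ : ℕ → ℝ) (g : ℕ → ℝ → ℝ) (h : ℕ → ℝ)
    (hh_pos : ∀ t, 1 ≤ t → 0 < h t)
    (hh_mono : ∀ s t, 1 ≤ s → s ≤ t → h s ≤ h t)
    (hLip : ∀ t x, 1 ≤ t → |g t x| ≤ L)
    (hrest_pos : ∀ t x, 1 ≤ t → h t < x → 0 ≤ g t x)
    (hrest_neg : ∀ t x, 1 ≤ t → x < -h t → g t x ≤ 0)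
    (hupd : ∀ t, 1 ≤ t → θ (t + 1) = θ t - η * g t (θ t))
    (T : ℕ) (hT : 1 ≤ T) :
    |θ (T + 1)| ≤ max |θ 1| (h T) + η * L := by
  have hL : 0 ≤ L := le_trans (abs_nonneg _) (hLip 1 (θ 1) le_rfl)
  induction T, hT using Nat.le_induction with
  | base =>
    rw [hupd 1 le_rfl]
    have hgb := hLip 1 (θ 1) le_rfl
    have h1 : |θ 1 - η * g 1 (θ 1)| ≤ |θ 1| + |η * g 1 (θ 1)| := abs_sub _ _
    have h2 : |η * g 1 (θ 1)| ≤ η * L := by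
      rw [abs_mul, abs_of_pos hη]
      exact mul_le_mul_of_nonneg_left hgb hη.le
    have h3 := le_max_left |θ 1| (h 1)
    linarith
  | succ t ht ih =>
    have ht1 : 1 ≤ t + 1 := by omega
    have hgb := hLip (t + 1) (θ (t + 1)) ht1
    have hG1 : -L ≤ g (t + 1) (θ (t + 1)) := neg_le_of_abs_le hgb
    have hG2 : g (t + 1) (θ (t + 1)) ≤ L := le_of_abs_le hgb
    have hηG1 : η * g (t + 1) (θ (t + 1)) ≤ η * L :=
      mul_le_mul_of_nonneg_left hG2 hη.le
    have hηG2 : η * (-L) ≤ η * g (t + 1) (θ (t + 1)) :=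
      mul_le_mul_of_nonneg_left hG1 hη.le
    rw [hupd (t + 1) ht1]
    have hmono : h t ≤ h (t + 1) := hh_mono t (t + 1) ht (by omega)
    have hpos : 0 < h (t + 1) := hh_pos (t + 1) ht1
    have hx1 : θ (t + 1) ≤ max |θ 1| (h t) + η * L := (abs_le.mp ih).2
    have hx2 : -(max |θ 1| (h t) + η * L) ≤ θ (t + 1) := (abs_le.mp ih).1
    have hMm : max |θ 1| (h t) ≤ max |θ 1| (h (t + 1)) := max_le_max le_rfl hmono
    have hhM : h (t + 1) ≤ max |θ 1| (h (t + 1)) := le_max_right _ _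
    rw [abs_le]
    constructor
    · rcases lt_or_ge (θ (t + 1)) (-h (t + 1)) with hc | hc
      · have hGn : g (t + 1) (θ (t + 1)) ≤ 0 := hrest_neg (t + 1) (θ (t + 1)) ht1 hc
        have : 0 ≤ η * -g (t + 1) (θ (t + 1)) := mul_nonneg hη.le (by linarith)
        linarith
      · linarith
    · rcases lt_or_ge (h (t + 1)) (θ (t + 1)) with hc | hc
      · have hGp : 0 ≤ g (t + 1) (θ (t + 1)) := hrest_pos (t + 1) (θ (t + 1)) ht1 hc
        have : 0 ≤ η * g (t + 1) (θ (t + 1)) := mul_nonneg hη.le hGp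
        linarith
      · linarith
end

section
/- Suppose each loss ℓ_t on ℝ^d is L-Lipschitz (‖g_t(θ)‖₂ ≤ L) and (h_t, 0)-restorative: g_t(θ)ᵀθ ≥ 0 whenever ‖θ‖₂ > h_t. Then gradient descent with constant step size η > 0 satisfies ‖θ_{T+1}‖₂² ≤ ‖θ_1‖₂² + η²L²T + 2ηL ∑_{t=1}^T h_t. -/
open Finset RealInnerProductSpace

/-- Multivariate gradient descent with constant step size, `L`-Lipschitz losses, and
`(h_t, 0)`-restorative gradient fields: the squared iterate norm satisfies
`‖θ_{T+1}‖² ≤ ‖θ₁‖² + η²L²T + 2ηL ∑_{t=1}^T h_t`. -/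
theorem gd_iterate_bound_zero_curv {d : ℕ} (η L : ℝ) (hη : 0 < η)
    (θ : ℕ → EuclideanSpace ℝ (Fin d)) (g : ℕ → EuclideanSpace ℝ (Fin d) → EuclideanSpace ℝ (Fin d))
    (h : ℕ → ℝ) (hh_nonneg : ∀ t, 1 ≤ t → 0 ≤ h t)
    (hLip : ∀ t x, 1 ≤ t → ‖g t x‖ ≤ L)
    (hrest : ∀ t x, 1 ≤ t → h t < ‖x‖ → 0 ≤ ⟪g t x, x⟫)
    (hupd : ∀ t, 1 ≤ t → θ (t + 1) = θ t - η • g t (θ t))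
    (T : ℕ) (hT : 1 ≤ T) :
    ‖θ (T + 1)‖ ^ 2 ≤ ‖θ 1‖ ^ 2 + η ^ 2 * L ^ 2 * T + 2 * η * L * ∑ t ∈ Finset.Icc 1 T, h t := by
  have hL : 0 ≤ L := le_trans (norm_nonneg _) (hLip 1 (θ 1) le_rfl)
  have step : ∀ t, 1 ≤ t → ‖θ (t + 1)‖ ^ 2 ≤ ‖θ t‖ ^ 2 + η ^ 2 * L ^ 2 + 2 * η * L * h t := by
    intro t ht
    rw [hupd t ht]
    rw [norm_sub_sq_real]
    have hg : ‖g t (θ t)‖ ≤ L := hLip t (θ t) ht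
    have h1 : ‖η • g t (θ t)‖ ^ 2 ≤ η ^ 2 * L ^ 2 := by
      rw [norm_smul, Real.norm_eq_abs, abs_of_pos hη, mul_pow]
      have := pow_le_pow_left₀ (norm_nonneg _) hg 2
      nlinarith
    have h2 : -(2 * ⟪θ t, η • g t (θ t)⟫) ≤ 2 * η * L * h t := by
      rw [real_inner_smul_right]
      rcases le_or_gt ‖θ t‖ (h t) with hc | hc
      · have habs : |⟪θ t, g t (θ t)⟫| ≤ ‖θ t‖ * ‖g t (θ t)‖ := abs_real_inner_le_norm _ _
        have h3 : -⟪θ t, g t (θ t)⟫ ≤ ‖θ t‖ * ‖g t (θ t)‖ := by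
          have := neg_abs_le ⟪θ t, g t (θ t)⟫; linarith
        have h4 : ‖θ t‖ * ‖g t (θ t)‖ ≤ h t * L :=
          mul_le_mul hc hg (norm_nonneg _) (le_trans (norm_nonneg _) hc)
        nlinarith
      · have := hrest t (θ t) ht hc
        rw [real_inner_comm] at this
        have hh := hh_nonneg t ht
        nlinarith [mul_nonneg hη.le this, mul_nonneg (mul_nonneg hη.le hL) hh]
    linarith
  induction T, hT using Nat.le_induction with
  | base =>
    have := step 1 le_rfl
    simp only [Finset.Icc_self, Finset.sum_singleton, Nat.cast_one]
    linarith
  | succ n hn ih =>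
    have hsum : ∑ t ∈ Finset.Icc 1 (n + 1), h t = (∑ t ∈ Finset.Icc 1 n, h t) + h (n + 1) := by
      rw [Finset.sum_Icc_succ_top (by omega)]
    have := step (n + 1) (by omega)
    push_cast
    rw [hsum]
    push_cast at ih
    nlinarith [hh_nonneg (n+1) (by omega), mul_pos hη hη]
end

section
/- Suppose each ℓ_t is L-Lipschitz and (h_t, φ_t)-restorative with positive curvature φ_t(θ) ≥ ηL²/2, i.e., g_t(θ)ᵀθ ≥ ηL²/2 whenever ‖θ‖₂ > h_t, where h_t is nondecreasing. Then gradient descent with constant step size η > 0 satisfies ‖θ_{T+1}‖₂ ≤ max{‖θ_1‖₂, h_T} + ηL. -/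
open Finset RealInnerProductSpace

/-- Gradient descent with constant step size, `L`-Lipschitz losses, and restorative gradient
fields with positive curvature `φ_t(θ) ≥ ηL²/2`, nondecreasing horizons: the iterates satisfy
`‖θ_{T+1}‖ ≤ max {‖θ₁‖, h_T} + ηL`. -/
theorem gd_iterate_bound_pos_curv {d : ℕ} (η L : ℝ) (hη : 0 < η)
    (θ : ℕ → EuclideanSpace ℝ (Fin d)) (g : ℕ → EuclideanSpace ℝ (Fin d) → EuclideanSpace ℝ (Fin d))
    (h : ℕ → ℝ) (hh_nonneg : ∀ t, 1 ≤ t → 0 ≤ h t)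
    (hh_mono : ∀ s t, 1 ≤ s → s ≤ t → h s ≤ h t)
    (hLip : ∀ t x, 1 ≤ t → ‖g t x‖ ≤ L)
    (hrest : ∀ t x, 1 ≤ t → h t < ‖x‖ → η * L ^ 2 / 2 ≤ ⟪g t x, x⟫)
    (hupd : ∀ t, 1 ≤ t → θ (t + 1) = θ t - η • g t (θ t))
    (T : ℕ) (hT : 1 ≤ T) :
    ‖θ (T + 1)‖ ≤ max ‖θ 1‖ (h T) + η * L := by
  have hL : 0 ≤ L := le_trans (norm_nonneg _) (hLip 1 (θ 1) le_rfl)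
  have hηL : 0 ≤ η * L := mul_nonneg hη.le hL
  -- contraction: when outside horizon, the update does not increase the norm
  have contract : ∀ t, 1 ≤ t → h t < ‖θ t‖ → ‖θ (t + 1)‖ ≤ ‖θ t‖ := by
    intro t ht hout
    rw [hupd t ht]
    have hsq : ‖θ t - η • g t (θ t)‖ ^ 2 ≤ ‖θ t‖ ^ 2 := by
      have hexp : ‖θ t - η • g t (θ t)‖ ^ 2
          = ‖θ t‖ ^ 2 - 2 * ⟪θ t, η • g t (θ t)⟫ + ‖η • g t (θ t)‖ ^ 2 :=
        norm_sub_sq_real _ _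
      rw [hexp]
      have hinner : ⟪θ t, η • g t (θ t)⟫ = η * ⟪g t (θ t), θ t⟫ := by
        rw [real_inner_smul_right, real_inner_comm]
      have hrest' := hrest t (θ t) ht hout
      have hg : ‖g t (θ t)‖ ≤ L := hLip t (θ t) ht
      have hnorm : ‖η • g t (θ t)‖ ^ 2 ≤ η ^ 2 * L ^ 2 := by
        rw [norm_smul, Real.norm_eq_abs, abs_of_pos hη, mul_pow]
        have := pow_le_pow_left₀ (norm_nonneg _) hg 2
        nlinarith [sq_nonneg η]
      nlinarith
    have := Real.sqrt_le_sqrt hsq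
    rwa [Real.sqrt_sq (norm_nonneg _), Real.sqrt_sq (norm_nonneg _)] at this
  -- one-step growth bound
  have step : ∀ t, 1 ≤ t → ‖θ (t + 1)‖ ≤ ‖θ t‖ + η * L := by
    intro t ht
    rw [hupd t ht]
    calc ‖θ t - η • g t (θ t)‖ ≤ ‖θ t‖ + ‖η • g t (θ t)‖ := norm_sub_le _ _
      _ ≤ ‖θ t‖ + η * L := by
          rw [norm_smul, Real.norm_eq_abs, abs_of_pos hη]
          exact add_le_add le_rfl (mul_le_mul_of_nonneg_left (hLip t (θ t) ht) hη.le)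
  -- main induction
  induction T with
  | zero => omega
  | succ n ih =>
    rcases Nat.eq_or_lt_of_le hT with h1 | h1
    · -- n + 1 = 1, base case
      have hn : n = 0 := by omega
      subst hn
      by_cases hc : h 1 < ‖θ 1‖
      · have := contract 1 le_rfl hc
        calc ‖θ 2‖ ≤ ‖θ 1‖ := this
          _ ≤ max ‖θ 1‖ (h 1) := le_max_left _ _
          _ ≤ max ‖θ 1‖ (h 1) + η * L := le_add_of_nonneg_right hηL
      · push_neg at hc
        calc ‖θ 2‖ ≤ ‖θ 1‖ + η * L := step 1 le_rfl
          _ ≤ max ‖θ 1‖ (h 1) + η * L := by gcongr; exact le_max_left _ _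
    · -- n ≥ 1
      have hn : 1 ≤ n := by omega
      have ihn := ih hn
      by_cases hc : h (n + 1) < ‖θ (n + 1)‖
      · have hcn : ‖θ (n + 1 + 1)‖ ≤ ‖θ (n + 1)‖ := contract (n + 1) (by omega) hc
        calc ‖θ (n + 1 + 1)‖ ≤ ‖θ (n + 1)‖ := hcn
          _ ≤ max ‖θ 1‖ (h n) + η * L := ihn
          _ ≤ max ‖θ 1‖ (h (n + 1)) + η * L := by
              gcongr
              exact hh_mono n (n + 1) hn (by omega)
      · push_neg at hc
        calc ‖θ (n + 1 + 1)‖ ≤ ‖θ (n + 1)‖ + η * L := step (n + 1) (by omega)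
          _ ≤ h (n + 1) + η * L := by gcongr
          _ ≤ max ‖θ 1‖ (h (n + 1)) + η * L := by gcongr; exact le_max_right _ _
end

section
/- Suppose ‖g_t(θ)‖₂ ≤ L_t whenever ‖θ‖₂ ≤ h_t (local Lipschitzness) and g_t(θ)ᵀθ ≥ (η/2)‖g_t(θ)‖₂² whenever ‖θ‖₂ > h_t (quadratic curvature), with h_t and L_t nondecreasing. Then gradient descent with constant step size η > 0 satisfies ‖θ_{T+1}‖₂ ≤ max{‖θ_1‖₂, h_T} + ηL_T. -/
open Finset RealInnerProductSpace

/-- Gradient descent with constant step size, locally Lipschitz losses, and restorative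
gradient fields with quadratic curvature `φ_t(θ) ≥ (η/2)‖g_t(θ)‖²`, with nondecreasing
horizons `h_t` and Lipschitz constants `L_t`: the iterates satisfy
`‖θ_{T+1}‖ ≤ max {‖θ₁‖, h_T} + η L_T`. -/
theorem gd_iterate_bound_quad_curv {d : ℕ} (η : ℝ) (hη : 0 < η)
    (θ : ℕ → EuclideanSpace ℝ (Fin d)) (g : ℕ → EuclideanSpace ℝ (Fin d) → EuclideanSpace ℝ (Fin d))
    (h L : ℕ → ℝ)
    (hh_nonneg : ∀ t, 1 ≤ t → 0 ≤ h t) (hL_nonneg : ∀ t, 1 ≤ t → 0 ≤ L t)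
    (hh_mono : ∀ s t, 1 ≤ s → s ≤ t → h s ≤ h t)
    (hL_mono : ∀ s t, 1 ≤ s → s ≤ t → L s ≤ L t)
    (hLipLoc : ∀ t x, 1 ≤ t → ‖x‖ ≤ h t → ‖g t x‖ ≤ L t)
    (hrest : ∀ t x, 1 ≤ t → h t < ‖x‖ → η / 2 * ‖g t x‖ ^ 2 ≤ ⟪g t x, x⟫)
    (hupd : ∀ t, 1 ≤ t → θ (t + 1) = θ t - η • g t (θ t))
    (T : ℕ) (hT : 1 ≤ T) :
    ‖θ (T + 1)‖ ≤ max ‖θ 1‖ (h T) + η * L T := by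
  -- key descent lemma in the curvature region
  have key : ∀ t, 1 ≤ t → h t < ‖θ t‖ → ‖θ (t + 1)‖ ≤ ‖θ t‖ := by
    intro t ht hlt
    rw [hupd t ht]
    have hsq : ‖θ t - η • g t (θ t)‖ ^ 2 ≤ ‖θ t‖ ^ 2 := by
      rw [norm_sub_sq_real]
      have h1 := hrest t (θ t) ht hlt
      have h2 : ⟪θ t, η • g t (θ t)⟫ = η * ⟪g t (θ t), θ t⟫ := by
        rw [real_inner_smul_right, real_inner_comm]
      have h3 : ‖η • g t (θ t)‖ ^ 2 = η ^ 2 * ‖g t (θ t)‖ ^ 2 := by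
        rw [norm_smul]; simp [mul_pow, abs_of_pos hη]
      rw [h2, h3]
      nlinarith [sq_nonneg ‖g t (θ t)‖]
    nlinarith [norm_nonneg (θ t - η • g t (θ t)), norm_nonneg (θ t)]
  -- small-norm case lemma
  have small : ∀ t, 1 ≤ t → ‖θ t‖ ≤ h t → ‖θ (t + 1)‖ ≤ h t + η * L t := by
    intro t ht hle
    rw [hupd t ht]
    calc ‖θ t - η • g t (θ t)‖ ≤ ‖θ t‖ + ‖η • g t (θ t)‖ := norm_sub_le _ _
      _ ≤ h t + η * L t := by
          rw [norm_smul, Real.norm_eq_abs, abs_of_pos hη]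
          exact add_le_add hle (by
            exact mul_le_mul_of_nonneg_left (hLipLoc t (θ t) ht hle) hη.le)
  induction T, hT using Nat.le_induction with
  | base =>
    rcases le_or_gt ‖θ 1‖ (h 1) with hc | hc
    · exact (small 1 le_rfl hc).trans (by gcongr; exact le_max_right _ _)
    · have := key 1 le_rfl hc
      have hL1 : 0 ≤ η * L 1 := mul_nonneg hη.le (hL_nonneg 1 le_rfl)
      calc ‖θ 2‖ ≤ ‖θ 1‖ := this
        _ ≤ max ‖θ 1‖ (h 1) + η * L 1 := by
            nlinarith [le_max_left ‖θ 1‖ (h 1)]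
  | succ t ht ih =>
    have hmono : max ‖θ 1‖ (h t) + η * L t ≤ max ‖θ 1‖ (h (t+1)) + η * L (t+1) :=
      add_le_add
        (max_le (le_max_left _ _) ((hh_mono t (t+1) ht (by omega)).trans (le_max_right _ _)))
        (mul_le_mul_of_nonneg_left (hL_mono t (t+1) ht (by omega)) hη.le)
    rcases le_or_gt ‖θ (t+1)‖ (h (t+1)) with hc | hc
    · exact (small (t+1) (by omega) hc).trans (by gcongr; exact le_max_right _ _)
    · calc ‖θ (t+2)‖ ≤ ‖θ (t+1)‖ := key (t+1) (by omega) hc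
        _ ≤ max ‖θ 1‖ (h t) + η * L t := ih
        _ ≤ _ := hmono
end

section
/- Apply gradient descent θ_{t+1} = θ_t − η(1{y_t ≤ θ_t} − τ) with constant step size η > 0, where |y_t| ≤ b_t for a nondecreasing sequence b_t. Then |(1/T)∑_{t=1}^T 1{y_t ≤ θ_t} − τ| ≤ (2|θ_1| + η + b_T)/(η T). -/
open Finset

/-- Online gradient descent on quantile losses with constant step size: the empirical
coverage frequency converges to `τ` at rate `(2|θ₁| + η + b_T)/(η T)`. -/
theorem quantile_loss_avg_grad_bound (τ η : ℝ) (hτ : τ ∈ Set.Icc (0 : ℝ) 1) (hη : 0 < η)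
    (y b : ℕ → ℝ) (θ : ℕ → ℝ)
    (hb : ∀ t, 1 ≤ t → |y t| ≤ b t)
    (hb_mono : ∀ s t, 1 ≤ s → s ≤ t → b s ≤ b t)
    (hupd : ∀ t, 1 ≤ t → θ (t + 1) = θ t - η * ((if y t ≤ θ t then (1 : ℝ) else 0) - τ))
    (T : ℕ) (hT : 1 ≤ T) :
    |(T : ℝ)⁻¹ * ∑ t ∈ Finset.Icc 1 T, (if y t ≤ θ t then (1 : ℝ) else 0) - τ| ≤
      (2 * |θ 1| + η + b T) / (η * T) := by
  obtain ⟨hτ0, hτ1⟩ := hτ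
  set g : ℕ → ℝ := fun t => (if y t ≤ θ t then (1 : ℝ) else 0) - τ with hg
  have hgabs : ∀ t, |g t| ≤ 1 := by
    intro t
    simp only [hg]
    split <;> rw [abs_le] <;> constructor <;> linarith
  have hbnn : ∀ t, 1 ≤ t → 0 ≤ b t := fun t ht => (abs_nonneg _).trans (hb t ht)
  -- One-step invariance
  have step : ∀ t, 1 ≤ t → ∀ M : ℝ, |θ 1| ≤ M → b t + η ≤ M → |θ t| ≤ M →
      |θ (t + 1)| ≤ M := by
    intro t ht M hM1 hM2 hMθ
    have hbt := hbnn t ht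
    have hyb := hb t ht
    have hy1 : y t ≤ b t := (le_abs_self _).trans hyb
    have hy2 : -(b t) ≤ y t := neg_le_of_abs_le hyb
    rw [abs_le] at hMθ
    rw [hupd t ht]
    by_cases h1 : b t < θ t
    · have hyθ : y t ≤ θ t := le_of_lt (lt_of_le_of_lt hy1 h1)
      rw [if_pos hyθ, abs_le]
      have h2 : 0 ≤ η * (1 - τ) := mul_nonneg hη.le (by linarith)
      have h3 : η * (1 - τ) ≤ η := by nlinarith [mul_nonneg hη.le hτ0]
      constructor <;> nlinarith
    · by_cases h2 : θ t < -(b t)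
      · have hyθ : ¬ y t ≤ θ t := by linarith
        rw [if_neg hyθ, abs_le]
        have h3 : 0 ≤ η * τ := mul_nonneg hη.le hτ0
        have h4 : η * τ ≤ η := by nlinarith
        constructor <;> nlinarith
      · push_neg at h1 h2
        calc |θ t - η * ((if y t ≤ θ t then (1 : ℝ) else 0) - τ)|
            ≤ |θ t| + |η * g t| := by
              rw [hg]; exact abs_sub _ _
          _ ≤ b t + η := by
              have := hgabs t
              have : |η * g t| ≤ η := by
                rw [abs_mul, abs_of_pos hη]
                nlinarith [abs_nonneg (g t)]
              have hθb : |θ t| ≤ b t := abs_le.2 ⟨by linarith, h1⟩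
              linarith
          _ ≤ M := hM2
  -- Invariant: iterates stay bounded
  have inv : ∀ t, 1 ≤ t → |θ (t + 1)| ≤ max (|θ 1|) (b t + η) := by
    intro t ht
    induction t, ht using Nat.le_induction with
    | base =>
      exact step 1 le_rfl _ (le_max_left _ _) (le_max_right _ _) (le_max_left _ _)
    | succ t ht ih =>
      have hmono : b t + η ≤ b (t + 1) + η := by
        have := hb_mono t (t + 1) ht (Nat.le_succ t); linarith
      have ih' : |θ (t + 1)| ≤ max (|θ 1|) (b (t + 1) + η) :=
        ih.trans (max_le_max le_rfl hmono)
      exact step (t + 1) (by omega) _ (le_max_left _ _) (le_max_right _ _) ih'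
  -- Telescoping
  have tele : ∀ S : ℕ, 1 ≤ S → θ (S + 1) = θ 1 - η * ∑ t ∈ Finset.Icc 1 S, g t := by
    have hupd' : ∀ t, 1 ≤ t → θ (t + 1) = θ t - η * g t := hupd
    intro S hS
    induction S, hS using Nat.le_induction with
    | base => rw [Finset.Icc_self, Finset.sum_singleton, hupd' 1 le_rfl]
    | succ S hS ih =>
      rw [Finset.sum_Icc_succ_top (by omega : 1 ≤ S + 1), hupd' (S + 1) (by omega), ih]
      ring
  have hTpos : (0 : ℝ) < T := by exact_mod_cast Nat.lt_of_lt_of_le Nat.zero_lt_one hT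
  have hηT : (0 : ℝ) < η * T := mul_pos hη hTpos
  -- sum of indicators minus τT equals sum of g
  have hS : (∑ t ∈ Finset.Icc 1 T, (if y t ≤ θ t then (1 : ℝ) else 0)) - τ * T
      = ∑ t ∈ Finset.Icc 1 T, g t := by
    rw [hg]
    rw [Finset.sum_sub_distrib, Finset.sum_const, Nat.card_Icc]
    simp [hT]
    ring
  have hsum : ∑ t ∈ Finset.Icc 1 T, g t = (θ 1 - θ (T + 1)) / η := by
    rw [tele T hT]; field_simp; ring
  have hc2 : η * ((∑ t ∈ Finset.Icc 1 T, (if y t ≤ θ t then (1 : ℝ) else 0)) - τ * T)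
      = θ 1 - θ (T + 1) := by
    rw [hS, hsum]; field_simp
  have hrw : (T : ℝ)⁻¹ * ∑ t ∈ Finset.Icc 1 T, (if y t ≤ θ t then (1 : ℝ) else 0) - τ
      = (θ 1 - θ (T + 1)) / (η * T) := by
    rw [← hc2]
    field_simp
  rw [hrw]
  have key : |θ 1 - θ (T + 1)| ≤ 2 * |θ 1| + η + b T := by
    have h1 := inv T hT
    have h2 : max (|θ 1|) (b T + η) ≤ |θ 1| + b T + η := by
      have := abs_nonneg (θ 1)
      have := hbnn T hT
      exact max_le (by linarith) (by linarith)
    calc |θ 1 - θ (T + 1)| ≤ |θ 1| + |θ (T + 1)| := abs_sub _ _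
      _ ≤ 2 * |θ 1| + η + b T := by linarith
  rw [abs_div, abs_of_pos hηT]
  gcongr
end

section
/- Let δ ∈ (0,1), η ≤ 2(1−δ)/(1+δ)², and |y_t| ≤ b_t with b_t sublinear and nondecreasing. Then gradient descent θ_{t+1} = θ_t − η(θ_t − y_t) satisfies |(1/T)∑θ_t − (1/T)∑y_t| ≤ (2|θ_1| + b_T η(1 + 1/δ) + b_T/δ)/(η T). -/
open Finset

/-- Online gradient descent on squared losses with constant step size
`η ≤ 2(1−δ)/(1+δ)²`: the average bias satisfies
`|(1/T)∑θ_t − (1/T)∑y_t| ≤ (2|θ₁| + b_T η(1 + 1/δ) + b_T/δ)/(ηT)`. -/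
theorem squared_loss_avg_grad_bound (δ η : ℝ) (hδ : δ ∈ Set.Ioo (0 : ℝ) 1)
    (hη : 0 < η) (hη2 : η ≤ 2 * (1 - δ) / (1 + δ) ^ 2)
    (y b : ℕ → ℝ) (θ : ℕ → ℝ)
    (hb : ∀ t, 1 ≤ t → |y t| ≤ b t)
    (hb_mono : ∀ s t, 1 ≤ s → s ≤ t → b s ≤ b t)
    (hb_sublinear : Filter.Tendsto (fun t : ℕ => b t / t) Filter.atTop (nhds 0))
    (hupd : ∀ t, 1 ≤ t → θ (t + 1) = θ t - η * (θ t - y t))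
    (T : ℕ) (hT : 1 ≤ T) :
    |(T : ℝ)⁻¹ * ∑ t ∈ Finset.Icc 1 T, θ t - (T : ℝ)⁻¹ * ∑ t ∈ Finset.Icc 1 T, y t| ≤
      (2 * |θ 1| + b T * η * (1 + 1 / δ) + b T / δ) / (η * T) := by
  obtain ⟨hδ0, hδ1⟩ := hδ
  have hbT0 : 0 ≤ b T := le_trans (abs_nonneg _) (hb T hT)
  -- η(1+δ) ≤ 2
  have hη2' : η * (1 + δ) ≤ 2 := by
    have h1 : (0:ℝ) < (1 + δ) ^ 2 := by positivity
    rw [le_div_iff₀ h1] at hη2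
    nlinarith
  -- key contraction inequality
  have key : η * δ ≤ 1 - |1 - η| := by
    rcases le_or_gt η 1 with h | h
    · rw [abs_of_nonneg (by linarith)]
      nlinarith
    · rw [abs_of_neg (by linarith)]
      nlinarith
  have habs1 : |1 - η| ≤ 1 - η * δ := by linarith
  have habs0 : 0 ≤ |1 - η| := abs_nonneg _
  have hbd : b T / δ ≥ 0 := by positivity
  -- uniform bound on iterates
  have hbnd : ∀ t, 1 ≤ t → t ≤ T + 1 → |θ t| ≤ |θ 1| + b T / δ := by
    intro t ht1 htT
    induction t, ht1 using Nat.le_induction with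
    | base => linarith [abs_nonneg (θ 1)]
    | succ n hn ih =>
      have hnT : n ≤ T := Nat.lt_succ_iff.mp htT
      have ihn : |θ n| ≤ |θ 1| + b T / δ := ih (le_trans hnT (Nat.le_succ T))
      have heq : θ (n + 1) = (1 - η) * θ n + η * y n := by
        rw [hupd n hn]; ring
      have h1 : |θ (n + 1)| ≤ |1 - η| * |θ n| + η * |y n| := by
        rw [heq]
        calc |(1 - η) * θ n + η * y n| ≤ |(1 - η) * θ n| + |η * y n| := abs_add_le _ _
          _ = |1 - η| * |θ n| + η * |y n| := by
              rw [abs_mul, abs_mul, abs_of_pos hη]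
      have hyn : |y n| ≤ b T := le_trans (hb n hn) (hb_mono n T hn hnT)
      have h2 : |1 - η| * |θ n| ≤ (1 - η * δ) * (|θ 1| + b T / δ) :=
        mul_le_mul habs1 ihn (abs_nonneg _) (by linarith)
      have h3 : (1 - η * δ) * (b T / δ) = b T / δ - η * b T := by
        field_simp
      nlinarith [abs_nonneg (θ 1), mul_le_mul_of_nonneg_left hyn (le_of_lt hη),
        mul_nonneg (le_of_lt hη) hbT0, mul_nonneg (mul_nonneg (le_of_lt hη) (le_of_lt hδ0)) (abs_nonneg (θ 1))]
  -- telescoping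
  have htel : ∀ n, 1 ≤ n → η * ∑ t ∈ Finset.Icc 1 n, (θ t - y t) = θ 1 - θ (n + 1) := by
    intro n hn
    induction n, hn using Nat.le_induction with
    | base =>
      simp only [Finset.Icc_self, Finset.sum_singleton]
      rw [hupd 1 le_rfl]; ring
    | succ n hn ih =>
      rw [Finset.sum_Icc_succ_top (by omega), mul_add, ih, hupd (n + 1) (by omega)]
      ring
  have hT0 : (0:ℝ) < (T:ℝ) := by exact_mod_cast hT
  have hS := htel T hT
  have hθT1 : |θ (T + 1)| ≤ |θ 1| + b T / δ := hbnd (T + 1) (by omega) le_rfl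
  have hηS : η * |∑ t ∈ Finset.Icc 1 T, (θ t - y t)| ≤ 2 * |θ 1| + b T / δ := by
    rw [← abs_of_pos hη, ← abs_mul, hS]
    calc |θ 1 - θ (T + 1)| ≤ |θ 1| + |θ (T + 1)| := abs_sub _ _
      _ ≤ 2 * |θ 1| + b T / δ := by linarith
  have hrw : (T : ℝ)⁻¹ * ∑ t ∈ Finset.Icc 1 T, θ t - (T : ℝ)⁻¹ * ∑ t ∈ Finset.Icc 1 T, y t
      = (T : ℝ)⁻¹ * ∑ t ∈ Finset.Icc 1 T, (θ t - y t) := by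
    rw [Finset.sum_sub_distrib, mul_sub]
  rw [hrw, le_div_iff₀ (by positivity), abs_mul, abs_of_nonneg (by positivity : (0:ℝ) ≤ (T:ℝ)⁻¹)]
  have hTne : (T:ℝ) ≠ 0 := ne_of_gt hT0
  have : (T : ℝ)⁻¹ * |∑ t ∈ Finset.Icc 1 T, (θ t - y t)| * (η * T)
      = η * |∑ t ∈ Finset.Icc 1 T, (θ t - y t)| := by
    field_simp
  rw [this]
  have hpos : 0 ≤ b T * η * (1 + 1 / δ) := by positivity
  linarith
end

section
/- Consider gradient descent θ_{t+1} = θ_t − η_t g_t(θ_t) with arbitrary positive step sizes, and set Δ_t = η_t^{-1} − η_{t-1}^{-1} with η_0^{-1} = 0. Then (1/T)∑_{t=1}^T g_t(θ_t) = (1/T)∑_{t=1}^T (θ_t − θ_{T+1}) Δ_t, and consequently ‖(1/T)∑_{t=1}^T g_t(θ_t)‖₂ ≤ (2/T)(max_{t ≤ T+1} ‖θ_t‖₂) ∑_{t=1}^T |Δ_t|. -/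
open Finset

/-- Gradient descent with arbitrary positive step sizes `η_t`: with
`Δ_t = η_t⁻¹ − η_{t−1}⁻¹` (and the convention `η_0⁻¹ = 0`), the average gradient
equals `(1/T)∑_{t=1}^T (θ_t − θ_{T+1})Δ_t`, and its norm is at most
`(2/T)(max_{t ≤ T+1} ‖θ_t‖)∑_{t=1}^T |Δ_t|`. -/
theorem gd_avg_grad_identity_arbitrary_steps {d : ℕ}
    (η Δ : ℕ → ℝ) (hη : ∀ t, 1 ≤ t → 0 < η t)
    (hΔ1 : Δ 1 = (η 1)⁻¹)
    (hΔ : ∀ t, 2 ≤ t → Δ t = (η t)⁻¹ - (η (t - 1))⁻¹)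
    (θ : ℕ → EuclideanSpace ℝ (Fin d)) (g : ℕ → EuclideanSpace ℝ (Fin d) → EuclideanSpace ℝ (Fin d))
    (hupd : ∀ t, 1 ≤ t → θ (t + 1) = θ t - η t • g t (θ t))
    (T : ℕ) (hT : 1 ≤ T) :
    (T : ℝ)⁻¹ • ∑ t ∈ Finset.Icc 1 T, g t (θ t) =
      (T : ℝ)⁻¹ • ∑ t ∈ Finset.Icc 1 T, Δ t • (θ t - θ (T + 1)) ∧
    ‖(T : ℝ)⁻¹ • ∑ t ∈ Finset.Icc 1 T, g t (θ t)‖ ≤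
      (2 / T) * ((Finset.Icc 1 (T + 1)).sup' (Finset.nonempty_Icc.mpr (by omega))
          fun t => ‖θ t‖) * ∑ t ∈ Finset.Icc 1 T, |Δ t| := by
  -- telescoping sum of Δ
  have hsum : ∀ S, 1 ≤ S → ∑ t ∈ Finset.Icc 1 S, Δ t = (η S)⁻¹ := by
    intro S hS
    induction S, hS using Nat.le_induction with
    | base => simp [hΔ1]
    | succ n hn ih =>
      rw [Finset.sum_Icc_succ_top (by omega), ih, hΔ (n + 1) (by omega)]
      simp
  -- g in terms of θ differences
  have hg : ∀ t, 1 ≤ t → g t (θ t) = (η t)⁻¹ • (θ t - θ (t + 1)) := by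
    intro t ht
    rw [hupd t ht, sub_sub_cancel, smul_smul, inv_mul_cancel₀ (hη t ht).ne', one_smul]
  -- key identity
  have key : ∀ S, 1 ≤ S → ∑ t ∈ Finset.Icc 1 S, (η t)⁻¹ • (θ t - θ (t + 1)) =
      ∑ t ∈ Finset.Icc 1 S, Δ t • (θ t - θ (S + 1)) := by
    intro S hS
    induction S, hS using Nat.le_induction with
    | base => simp [hΔ1]
    | succ n hn ih =>
      rw [Finset.sum_Icc_succ_top (show 1 ≤ n + 1 by omega),
        Finset.sum_Icc_succ_top (show 1 ≤ n + 1 by omega), ih]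
      have : ∀ t ∈ Finset.Icc 1 n, Δ t • (θ t - θ (n + 1 + 1)) =
          Δ t • (θ t - θ (n + 1)) + Δ t • (θ (n + 1) - θ (n + 1 + 1)) := by
        intro t _
        rw [← smul_add]
        congr 1
        abel
      rw [Finset.sum_congr rfl this, Finset.sum_add_distrib, ← Finset.sum_smul,
        hsum n hn, hΔ (n + 1) (by omega)]
      simp only [Nat.add_sub_cancel, sub_smul]
      abel
  have keyg : ∑ t ∈ Finset.Icc 1 T, g t (θ t) =
      ∑ t ∈ Finset.Icc 1 T, Δ t • (θ t - θ (T + 1)) := by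
    rw [Finset.sum_congr rfl fun t ht => hg t (Finset.mem_Icc.mp ht).1, key T hT]
  refine ⟨by rw [keyg], ?_⟩
  set M := (Finset.Icc 1 (T + 1)).sup' (Finset.nonempty_Icc.mpr (by omega))
      fun t => ‖θ t‖ with hM
  have hMle : ∀ t ∈ Finset.Icc 1 (T + 1), ‖θ t‖ ≤ M := fun t ht =>
    Finset.le_sup' (fun t => ‖θ t‖) ht
  have hM0 : 0 ≤ M := le_trans (norm_nonneg (θ 1)) (hMle 1 (by simp))
  have hbound : ∀ t ∈ Finset.Icc 1 T, ‖Δ t • (θ t - θ (T + 1))‖ ≤ |Δ t| * (2 * M) := by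
    intro t ht
    rw [norm_smul, Real.norm_eq_abs]
    apply mul_le_mul_of_nonneg_left _ (abs_nonneg _)
    calc ‖θ t - θ (T + 1)‖ ≤ ‖θ t‖ + ‖θ (T + 1)‖ := norm_sub_le _ _
      _ ≤ M + M := add_le_add
          (hMle t (Finset.mem_Icc.mpr ⟨(Finset.mem_Icc.mp ht).1, by
            have := (Finset.mem_Icc.mp ht).2; omega⟩))
          (hMle (T + 1) (by simp))
      _ = 2 * M := by ring
  calc ‖(T : ℝ)⁻¹ • ∑ t ∈ Finset.Icc 1 T, g t (θ t)‖
      = (T : ℝ)⁻¹ * ‖∑ t ∈ Finset.Icc 1 T, Δ t • (θ t - θ (T + 1))‖ := by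
        rw [keyg, norm_smul, Real.norm_eq_abs, abs_of_nonneg (by positivity)]
    _ ≤ (T : ℝ)⁻¹ * ∑ t ∈ Finset.Icc 1 T, |Δ t| * (2 * M) := by
        apply mul_le_mul_of_nonneg_left _ (by positivity)
        exact le_trans (norm_sum_le _ _) (Finset.sum_le_sum hbound)
    _ = (2 / T) * M * ∑ t ∈ Finset.Icc 1 T, |Δ t| := by
        rw [← Finset.sum_mul]
        field_simp
end

section
/- Assume each ℓ_t is convex, and suppose the iterates θ_t satisfy gradient equilibrium: (1/T)∑_{t=1}^T g_t(θ_t) → 0 as T → ∞, where g_t(θ_t) ∈ ∂ℓ_t(θ_t). Then the iterates satisfy no move regret: for every bounded set D ⊆ ℝ^d, liminf_{T→∞} inf_{δ∈D} (1/T)(∑_{t=1}^T ℓ_t(θ_t + δ) − ∑_{t=1}^T ℓ_t(θ_t)) ≥ 0. -/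
open Finset RealInnerProductSpace

/-- For convex losses, gradient equilibrium implies no move regret: if the average
subgradient tends to zero, then for every bounded set `D`,
`liminf_{T→∞} inf_{δ∈D} (1/T)(∑ℓ_t(θ_t+δ) − ∑ℓ_t(θ_t)) ≥ 0`
(expressed in `ε`–`T₀` form). -/
theorem geq_implies_nmr {d : ℕ}
    (ℓ : ℕ → EuclideanSpace ℝ (Fin d) → ℝ) (θ g : ℕ → EuclideanSpace ℝ (Fin d))
    (hconv : ∀ t, ConvexOn ℝ Set.univ (ℓ t))
    (hsubgrad : ∀ t, 1 ≤ t → ∀ z, ℓ t (θ t) + ⟪g t, z - θ t⟫ ≤ ℓ t z)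
    (hgeq : Filter.Tendsto (fun T : ℕ => (T : ℝ)⁻¹ • ∑ t ∈ Finset.Icc 1 T, g t)
      Filter.atTop (nhds 0)) :
    ∀ D : Set (EuclideanSpace ℝ (Fin d)), Bornology.IsBounded D →
      ∀ ε : ℝ, 0 < ε → ∃ T₀ : ℕ, ∀ T : ℕ, T₀ ≤ T → ∀ δ ∈ D,
        -ε ≤ (T : ℝ)⁻¹ *
          (∑ t ∈ Finset.Icc 1 T, ℓ t (θ t + δ) - ∑ t ∈ Finset.Icc 1 T, ℓ t (θ t)) := by

  intro D hD ε hε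
  obtain ⟨C, hC⟩ := hD.exists_norm_le
  set C' : ℝ := max C 0 with hC'
  have hC'0 : 0 ≤ C' := le_max_right _ _
  have hεC : 0 < ε / (C' + 1) := div_pos hε (by linarith)
  have htend := (NormedAddCommGroup.tendsto_nhds_zero.mp hgeq) (ε / (C' + 1)) hεC
  obtain ⟨T₀, hT₀⟩ := Filter.eventually_atTop.mp htend
  refine ⟨T₀, fun T hT δ hδ => ?_⟩
  have hnorm : ‖(T : ℝ)⁻¹ • ∑ t ∈ Finset.Icc 1 T, g t‖ < ε / (C' + 1) := hT₀ T hT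
  have hδC : ‖δ‖ ≤ C' := le_trans (hC δ hδ) (le_max_left _ _)
  have key : ∀ t ∈ Finset.Icc 1 T, ⟪g t, δ⟫ ≤ ℓ t (θ t + δ) - ℓ t (θ t) := by
    intro t ht
    have h1 : 1 ≤ t := (Finset.mem_Icc.mp ht).1
    have h := hsubgrad t h1 (θ t + δ)
    rw [add_sub_cancel_left] at h
    linarith
  have hsum : ⟪∑ t ∈ Finset.Icc 1 T, g t, δ⟫ ≤
      ∑ t ∈ Finset.Icc 1 T, ℓ t (θ t + δ) - ∑ t ∈ Finset.Icc 1 T, ℓ t (θ t) := by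
    rw [sum_inner, ← Finset.sum_sub_distrib]
    exact Finset.sum_le_sum key
  have hTnn : (0:ℝ) ≤ (T : ℝ)⁻¹ := by positivity
  have h2 : ⟪(T : ℝ)⁻¹ • ∑ t ∈ Finset.Icc 1 T, g t, δ⟫ ≤
      (T : ℝ)⁻¹ * (∑ t ∈ Finset.Icc 1 T, ℓ t (θ t + δ) - ∑ t ∈ Finset.Icc 1 T, ℓ t (θ t)) := by
    rw [real_inner_smul_left]
    exact mul_le_mul_of_nonneg_left hsum hTnn
  have h3 : -(ε / (C' + 1) * C') ≤ ⟪(T : ℝ)⁻¹ • ∑ t ∈ Finset.Icc 1 T, g t, δ⟫ := by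
    have := abs_real_inner_le_norm ((T : ℝ)⁻¹ • ∑ t ∈ Finset.Icc 1 T, g t) δ
    have hb : ‖(T : ℝ)⁻¹ • ∑ t ∈ Finset.Icc 1 T, g t‖ * ‖δ‖ ≤ ε / (C' + 1) * C' :=
      mul_le_mul hnorm.le hδC (norm_nonneg _) hεC.le
    nlinarith [neg_abs_le (⟪(T : ℝ)⁻¹ • ∑ t ∈ Finset.Icc 1 T, g t, δ⟫ : ℝ)]
  have h4 : -(ε / (C' + 1) * C') ≥ -ε := by
    have : ε / (C' + 1) * C' ≤ ε := by
      rw [div_mul_eq_mul_div, div_le_iff₀ (by linarith)]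
      nlinarith
    linarith
  linarith
end

section
/- Assume each ℓ_t is differentiable with β-Lipschitz gradient (β-smooth). If the iterates θ_t satisfy no move regret, then they satisfy gradient equilibrium: (1/T)∑_{t=1}^T ∇ℓ_t(θ_t) → 0 as T → ∞. Equivalently, letting G_T = (1/T)∑_{t=1}^T ∇ℓ_t(θ_t), one has inf_δ (1/T)(∑ℓ_t(θ_t+δ) − ∑ℓ_t(θ_t)) ≤ −‖G_T‖₂²/(2β) by choosing δ = −G_T/β. -/
open Finset
open scoped RealInnerProductSpace

lemma descent_lemma {d : ℕ} (β : ℝ)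
    (f : EuclideanSpace ℝ (Fin d) → ℝ)
    (g : EuclideanSpace ℝ (Fin d) → EuclideanSpace ℝ (Fin d))
    (hg : ∀ x, HasGradientAt f (g x) x)
    (hLip : ∀ x y, ‖g x - g y‖ ≤ β * ‖x - y‖)
    (x δ : EuclideanSpace ℝ (Fin d)) :
    f (x + δ) ≤ f x + ⟪g x, δ⟫ + β / 2 * ‖δ‖ ^ 2 := by
  set ψ : ℝ → ℝ := fun s => f (x + s • δ) - s * ⟪g x, δ⟫ - β * s ^ 2 / 2 * ‖δ‖ ^ 2 with hψ
  have hd : ∀ s : ℝ, HasDerivAt ψ (⟪g (x + s • δ), δ⟫ - ⟪g x, δ⟫ - β * s * ‖δ‖ ^ 2) s := by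
    intro s
    have hc : HasDerivAt (fun s : ℝ => x + s • δ) δ s := by
      simpa using ((hasDerivAt_id s).smul_const δ).const_add x
    have h1 : HasDerivAt (fun s : ℝ => f (x + s • δ)) ⟪g (x + s • δ), δ⟫ s := by
      have := ((hg (x + s • δ)).hasFDerivAt).comp_hasDerivAt s hc
      exact this
    have h2 : HasDerivAt (fun s : ℝ => s * ⟪g x, δ⟫) ⟪g x, δ⟫ s := by
      simpa using (hasDerivAt_id s).mul_const (⟪g x, δ⟫)
    have h3 : HasDerivAt (fun s : ℝ => β * s ^ 2 / 2 * ‖δ‖ ^ 2) (β * s * ‖δ‖ ^ 2) s := by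
      have hp : HasDerivAt (fun s : ℝ => s ^ 2) (2 * s) s := by
        simpa using hasDerivAt_pow 2 s
      have := ((hp.const_mul β).div_const 2).mul_const (‖δ‖ ^ 2)
      exact this.congr_deriv (by ring)
    exact (h1.sub h2).sub h3
  have key : ψ 1 ≤ ψ 0 := by
    have hanti : AntitoneOn ψ (Set.Icc 0 1) := by
      apply antitoneOn_of_deriv_nonpos (convex_Icc 0 1)
      · exact fun s _ => (hd s).continuousAt.continuousWithinAt
      · intro s _
        exact (hd s).differentiableAt.differentiableWithinAt
      · intro s hs
        rw [interior_Icc] at hs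
        rw [(hd s).deriv]
        have h1 : ⟪g (x + s • δ) - g x, δ⟫ ≤ β * s * ‖δ‖ ^ 2 := by
          calc ⟪g (x + s • δ) - g x, δ⟫ ≤ ‖g (x + s • δ) - g x‖ * ‖δ‖ :=
                real_inner_le_norm _ _
            _ ≤ (β * ‖(x + s • δ) - x‖) * ‖δ‖ := by
                have := hLip (x + s • δ) x
                have h0 : (0:ℝ) ≤ ‖δ‖ := norm_nonneg _
                nlinarith [norm_nonneg (g (x + s • δ) - g x)]
            _ = β * (|s| * ‖δ‖) * ‖δ‖ := by
                rw [add_sub_cancel_left, norm_smul]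
                simp [Real.norm_eq_abs]
            _ = β * s * ‖δ‖ ^ 2 := by
                rw [abs_of_pos hs.1]; ring
        have h2 : ⟪g (x + s • δ) - g x, δ⟫ = ⟪g (x + s • δ), δ⟫ - ⟪g x, δ⟫ :=
          inner_sub_left _ _ _
        linarith
    exact hanti (by norm_num) (by norm_num) (by norm_num)
  have e1 : ψ 1 = f (x + δ) - ⟪g x, δ⟫ - β / 2 * ‖δ‖ ^ 2 := by simp [hψ]
  have e0 : ψ 0 = f x := by simp [hψ]
  rw [e1, e0] at key
  linarith

lemma avg_bound {d : ℕ} (β : ℝ) (hβ : 0 < β)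
    (ℓ : ℕ → EuclideanSpace ℝ (Fin d) → ℝ)
    (G : ℕ → EuclideanSpace ℝ (Fin d) → EuclideanSpace ℝ (Fin d))
    (θ : ℕ → EuclideanSpace ℝ (Fin d))
    (hgrad : ∀ t x, HasGradientAt (ℓ t) (G t x) x)
    (hLip : ∀ t x y, ‖G t x - G t y‖ ≤ β * ‖x - y‖)
    (T : ℕ) (hT : 1 ≤ T) (δ : EuclideanSpace ℝ (Fin d)) :
    (T : ℝ)⁻¹ * (∑ t ∈ Finset.Icc 1 T, ℓ t (θ t + δ) - ∑ t ∈ Finset.Icc 1 T, ℓ t (θ t)) ≤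
      ⟪(T : ℝ)⁻¹ • ∑ t ∈ Finset.Icc 1 T, G t (θ t), δ⟫ + β / 2 * ‖δ‖ ^ 2 := by
  have hTpos : (0:ℝ) < T := by exact_mod_cast hT
  have hsum : ∑ t ∈ Finset.Icc 1 T, ℓ t (θ t + δ) ≤
      ∑ t ∈ Finset.Icc 1 T, (ℓ t (θ t) + ⟪G t (θ t), δ⟫ + β / 2 * ‖δ‖ ^ 2) :=
    Finset.sum_le_sum fun t _ => descent_lemma β (ℓ t) (fun x => G t x) (hgrad t) (hLip t) (θ t) δ
  have hcard : (Finset.Icc 1 T).card = T := by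
    rw [Nat.card_Icc]; omega
  have hsum2 : ∑ t ∈ Finset.Icc 1 T, (ℓ t (θ t) + ⟪G t (θ t), δ⟫ + β / 2 * ‖δ‖ ^ 2)
      = ∑ t ∈ Finset.Icc 1 T, ℓ t (θ t) + ⟪∑ t ∈ Finset.Icc 1 T, G t (θ t), δ⟫
        + (T : ℝ) * (β / 2 * ‖δ‖ ^ 2) := by
    rw [Finset.sum_add_distrib, Finset.sum_add_distrib, Finset.sum_const, hcard,
      sum_inner, nsmul_eq_mul]
  rw [hsum2] at hsum
  rw [real_inner_smul_left]
  set A := ∑ t ∈ Finset.Icc 1 T, ℓ t (θ t + δ)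
  set B := ∑ t ∈ Finset.Icc 1 T, ℓ t (θ t)
  set S := ⟪∑ t ∈ Finset.Icc 1 T, G t (θ t), δ⟫
  set c := β / 2 * ‖δ‖ ^ 2
  have h1 : (T:ℝ)⁻¹ * (A - B) ≤ (T:ℝ)⁻¹ * (S + (T:ℝ) * c) := by
    apply mul_le_mul_of_nonneg_left _ (by positivity)
    linarith
  have h2 : (T:ℝ)⁻¹ * (S + (T:ℝ) * c) = (T:ℝ)⁻¹ * S + c := by
    field_simp
  linarith

/-- For β-smooth losses, no move regret implies gradient equilibrium: if for every
bounded set `D`, `liminf_{T→∞} inf_{δ∈D} (1/T)(∑ℓ_t(θ_t+δ) − ∑ℓ_t(θ_t)) ≥ 0`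
(in `ε`–`T₀` form), then the average gradient `G_T = (1/T)∑∇ℓ_t(θ_t)` tends to zero;
moreover, choosing `δ = −G_T/β` shows
`(1/T)(∑ℓ_t(θ_t+δ) − ∑ℓ_t(θ_t)) ≤ −‖G_T‖²/(2β)`. -/
theorem nmr_implies_geq {d : ℕ} (β : ℝ) (hβ : 0 < β)
    (ℓ : ℕ → EuclideanSpace ℝ (Fin d) → ℝ)
    (G : ℕ → EuclideanSpace ℝ (Fin d) → EuclideanSpace ℝ (Fin d))
    (θ : ℕ → EuclideanSpace ℝ (Fin d))
    (hgrad : ∀ t x, HasGradientAt (ℓ t) (G t x) x)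
    (hLip : ∀ t x y, ‖G t x - G t y‖ ≤ β * ‖x - y‖)
    (hnmr : ∀ D : Set (EuclideanSpace ℝ (Fin d)), Bornology.IsBounded D →
      ∀ ε : ℝ, 0 < ε → ∃ T₀ : ℕ, ∀ T : ℕ, T₀ ≤ T → ∀ δ ∈ D,
        -ε ≤ (T : ℝ)⁻¹ *
          (∑ t ∈ Finset.Icc 1 T, ℓ t (θ t + δ) - ∑ t ∈ Finset.Icc 1 T, ℓ t (θ t))) :
    Filter.Tendsto (fun T : ℕ => (T : ℝ)⁻¹ • ∑ t ∈ Finset.Icc 1 T, G t (θ t))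
      Filter.atTop (nhds 0) ∧
    ∀ T : ℕ, 1 ≤ T →
      (T : ℝ)⁻¹ *
          (∑ t ∈ Finset.Icc 1 T,
              ℓ t (θ t + (-(β⁻¹)) • ((T : ℝ)⁻¹ • ∑ s ∈ Finset.Icc 1 T, G s (θ s))) -
            ∑ t ∈ Finset.Icc 1 T, ℓ t (θ t)) ≤
        -‖(T : ℝ)⁻¹ • ∑ s ∈ Finset.Icc 1 T, G s (θ s)‖ ^ 2 / (2 * β) := by
  constructor
  · rw [NormedAddCommGroup.tendsto_nhds_zero]
    intro ε hε
    rw [Filter.eventually_atTop]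
    set r : ℝ := ε / β with hr
    have hrpos : 0 < r := div_pos hε hβ
    have hβr : β * r = ε := by rw [hr]; field_simp
    obtain ⟨T₀, hT₀⟩ := hnmr (Metric.closedBall 0 r) (Metric.isBounded_closedBall)
      (r * ε / 4) (by positivity)
    refine ⟨max T₀ 1, fun T hT => ?_⟩
    have hT1 : 1 ≤ T := le_trans (le_max_right _ _) hT
    have hTT₀ : T₀ ≤ T := le_trans (le_max_left _ _) hT
    set GT := (T : ℝ)⁻¹ • ∑ t ∈ Finset.Icc 1 T, G t (θ t) with hGT
    by_cases hG : GT = 0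
    · simp only [hG, norm_zero]; exact hε
    · have hn : 0 < ‖GT‖ := norm_pos_iff.mpr hG
      set δ := (-(r / ‖GT‖)) • GT with hδ
      have hδnorm : ‖δ‖ = r := by
        rw [hδ, norm_smul, Real.norm_eq_abs, abs_neg, abs_of_pos (div_pos hrpos hn)]
        field_simp
      have hδmem : δ ∈ Metric.closedBall (0 : EuclideanSpace ℝ (Fin d)) r := by
        rw [Metric.mem_closedBall, dist_zero_right, hδnorm]
      have hlow := hT₀ T hTT₀ δ hδmem
      have hup := avg_bound β hβ ℓ G θ hgrad hLip T hT1 δ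
      have hinner : ⟪GT, δ⟫ = -(r * ‖GT‖) := by
        rw [hδ, real_inner_smul_right, real_inner_self_eq_norm_sq]
        field_simp
      rw [← hGT, hinner, hδnorm] at hup
      have key : -(r * ε / 4) ≤ -(r * ‖GT‖) + β / 2 * r ^ 2 := le_trans hlow hup
      have h34 : ‖GT‖ ≤ 3 * ε / 4 := by
        have : r * ‖GT‖ ≤ r * ε / 4 + β / 2 * r ^ 2 := by linarith
        nlinarith [hrpos, hβr]
      linarith
  · intro T hT
    set GT := (T : ℝ)⁻¹ • ∑ s ∈ Finset.Icc 1 T, G s (θ s) with hGT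
    have hup := avg_bound β hβ ℓ G θ hgrad hLip T hT ((-(β⁻¹)) • GT)
    have hinner : ⟪GT, (-(β⁻¹)) • GT⟫ = -(β⁻¹) * ‖GT‖ ^ 2 := by
      rw [real_inner_smul_right, real_inner_self_eq_norm_sq]
    have hnorm : ‖(-(β⁻¹)) • GT‖ ^ 2 = β⁻¹ ^ 2 * ‖GT‖ ^ 2 := by
      rw [norm_smul, Real.norm_eq_abs, abs_neg, abs_of_pos (inv_pos.mpr hβ)]
      ring
    rw [← hGT, hinner, hnorm] at hup
    have heq : -(β⁻¹) * ‖GT‖ ^ 2 + β / 2 * (β⁻¹ ^ 2 * ‖GT‖ ^ 2)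
        = -‖GT‖ ^ 2 / (2 * β) := by
      field_simp
      ring
    linarith [hup, heq.le, heq.ge]
end
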